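/- Let α be a self-dual basis of F_{q^m} over F_q, let 1 ≤ k ≤ m−1, and let e be an integer with 0 ≤ e ≤ k. Then dim_{F_{q^m}}(G_k(α) + G_k(α)^{⊥_e}) = max(k, m−e). -/

import Mathlib

/-!
If `α` is a self-dual basis, the matrix `W` with rows `w_a = α ^ q ^ a` (`a < m`) satisfies
`Wᵀ W = 1`, because its `(i, j)` entry is `Tr (α_i α_j)`. Hence also `W Wᵀ = 1`: the rows are an
orthonormal basis of `F^m` for the dot product, and the coordinates of `x` are the `w_a ⬝ x`.
Since `G_k(α)` is spanned by the `w_b` with `b < k` and the `q^e`-Frobenius sends `w_b` to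
`w_{(b + e) mod m}`, the dual `G_k(α)^{⊥_e}` is spanned by the rows `w_a` with `a ≠ b + e mod m`
for all `b < k`. So `G_k + G_k^{⊥_e}` is spanned by the `w_a` with `a < k` or `a ≥ k + e`, and
there are `k + (m - (k + e)) = max k (m - e)` of them when `e ≤ k ≤ m`.
-/

/-- The Gabidulin code `G_k(α)`: the `F`-span of the vectors `α^{q^i}`, `i = 0, …, k-1`. -/
noncomputable def gab {F : Type*} [Field F] (q : ℕ) {m : ℕ} (k : ℕ) (α : Fin m → F) :
    Submodule F (Fin m → F) :=
  Submodule.span F (Set.range fun i : Fin k => fun j : Fin m => α j ^ q ^ (i : ℕ))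

/-- The `e`-Galois dual of a linear code `C ⊆ F^n`,
    with respect to the inner product `x ·_e y = ∑ i, x i * (y i)^(q^e)`. -/
def galoisDual {F : Type*} [Field F] (q e : ℕ) {n : ℕ} (C : Submodule F (Fin n → F)) :
    Submodule F (Fin n → F) where
  carrier := {x | ∀ c ∈ C, ∑ i, x i * c i ^ q ^ e = 0}
  add_mem' := by
    intro a b ha hb c hc
    simp only [Set.mem_setOf_eq] at *
    simp [Pi.add_apply, add_mul, Finset.sum_add_distrib, ha c hc, hb c hc]
  zero_mem' := by
    intro c hc
    simp
  smul_mem' := by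
    intro r a ha c hc
    simp only [Set.mem_setOf_eq] at *
    simp [Pi.smul_apply, smul_eq_mul, mul_assoc, ← Finset.mul_sum, ha c hc]

open Matrix Module Submodule
open scoped Finset

namespace Matrix

variable {F ι : Type*} [Field F] [Fintype ι] [DecidableEq ι] {W : Matrix ι ι F}

noncomputable def rowBasisOfMulTransposeEqOne (hW : W * Wᵀ = 1) : Basis ι F (ι → F) :=
  .ofEquivFun <| .ofLinearMap (f := toLin' W) (g := toLin' Wᵀ)
    (by rw [← toLin'_mul, hW, toLin'_one])
    (by rw [← toLin'_mul, mul_eq_one_comm.mp hW, toLin'_one])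

theorem coe_rowBasisOfMulTransposeEqOne (hW : W * Wᵀ = 1) :
    ⇑(rowBasisOfMulTransposeEqOne hW) = W.row := by
  ext a j
  simp [rowBasisOfMulTransposeEqOne, Basis.coe_ofEquivFun]

theorem rowBasisOfMulTransposeEqOne_repr_apply (hW : W * Wᵀ = 1) (x : ι → F) (a : ι) :
    (rowBasisOfMulTransposeEqOne hW).repr x a = W a ⬝ᵥ x :=
  Basis.ofEquivFun_repr_apply _ x a

theorem mem_span_image_rows_iff (hW : W * Wᵀ = 1) (s : Set ι) (x : ι → F) :
    x ∈ span F (W.row '' s) ↔ ∀ a ∉ s, W a ⬝ᵥ x = 0 := by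
  conv_lhs => rw [← coe_rowBasisOfMulTransposeEqOne hW, Basis.mem_span_image]
  simp only [Set.subset_def, Finset.mem_coe, Finsupp.mem_support_iff,
    rowBasisOfMulTransposeEqOne_repr_apply]
  exact forall_congr' fun a => not_imp_comm

theorem finrank_span_image_rows (hW : W * Wᵀ = 1) (s : Finset ι) :
    finrank F (span F (W.row '' s)) = s.card := by
  rw [← coe_rowBasisOfMulTransposeEqOne hW, Set.image_eq_range]
  exact (finrank_span_eq_card ((rowBasisOfMulTransposeEqOne hW).linearIndependent.comp _
      Subtype.val_injective)).trans (Fintype.card_coe s)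

end Matrix

theorem mem_galoisDual_span_iff {F : Type*} [Field F] {q e n : ℕ} (φ : F →+* F)
    (hφ : ∀ x, φ x = x ^ q ^ e) (s : Set (Fin n → F)) (x : Fin n → F) :
    x ∈ galoisDual q e (span F s) ↔ ∀ c ∈ s, ∑ i, x i * c i ^ q ^ e = 0 := by
  refine ⟨fun hx c hc => hx c (subset_span hc), fun hs c hc => ?_⟩
  simp_rw [← hφ] at hs ⊢
  induction hc using span_induction with
  | mem c hc => exact hs c hc
  | zero => simp
  | add c d _ _ hc hd => simp [mul_add, Finset.sum_add_distrib, hc, hd]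
  | smul r c _ hc => simp [mul_left_comm _ (φ r), ← Finset.mul_sum, hc]

/-- The transpose of the Moore matrix of `α`. -/
def frobeniusMatrix {F : Type*} [Field F] (q : ℕ) {m : ℕ} (α : Fin m → F) :
    Matrix (Fin m) (Fin m) F :=
  of fun a j => α j ^ q ^ (a : ℕ)

theorem gab_eq_span_frobeniusMatrix {F : Type*} [Field F] {q m k : ℕ} (α : Fin m → F)
    (hk : k ≤ m) :
    gab q k α = span F ((frobeniusMatrix q α).row '' {a | (a : ℕ) < k}) := by
  rw [gab]
  congr 1
  ext y
  constructor
  · rintro ⟨i, rfl⟩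
    exact ⟨⟨i, i.2.trans_le hk⟩, i.2, rfl⟩
  · rintro ⟨a, ha, rfl⟩
    exact ⟨⟨a, ha⟩, rfl⟩

section FiniteField

variable {K F : Type*} [Field K] [Fintype K] [Field F] [Fintype F] [Algebra K F] {m : ℕ}

theorem pow_card_pow_mod_finrank (x : F) (a : ℕ) :
    x ^ Fintype.card K ^ (a % finrank K F) = x ^ Fintype.card K ^ a := by
  conv_rhs => rw [← Nat.mod_add_div a (finrank K F), pow_add, pow_mul, pow_mul,
    ← Module.card_eq_pow_finrank, FiniteField.pow_card_pow]

theorem frobeniusMatrix_mul_transpose_eq_one {α : Fin m → F} (hm : finrank K F = m)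
    (hsd : ∀ i j, Algebra.trace K F (α i * α j) = if i = j then 1 else 0) :
    frobeniusMatrix (Fintype.card K) α * (frobeniusMatrix (Fintype.card K) α)ᵀ = 1 := by
  rw [mul_eq_one_comm]
  ext i j
  have htr := FiniteField.algebraMap_trace_eq_sum_pow K F (α i * α j)
  rw [hsd, hm, ← Fin.sum_univ_eq_sum_range, Nat.card_eq_fintype_card] at htr
  simpa [frobeniusMatrix, mul_apply, one_apply, mul_pow, apply_ite (algebraMap K F)]
    using htr.symm

theorem galoisDual_gab_eq_span_frobeniusMatrix {α : Fin m → F} (hm : finrank K F = m)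
    (hsd : ∀ i j, Algebra.trace K F (α i * α j) = if i = j then 1 else 0) (k e : ℕ) :
    galoisDual (Fintype.card K) e (gab (Fintype.card K) k α) =
      span F ((frobeniusMatrix (Fintype.card K) α).row '' {a | ∀ b < k, (b + e) % m ≠ a}) := by
  have hφ (y : F) : (FiniteField.frobeniusAlgHom K F ^ e) y = y ^ Fintype.card K ^ e := by
    rw [AlgHom.coe_pow, FiniteField.coe_frobeniusAlgHom, pow_iterate]
  have hrow (b : ℕ) (hb : (b + e) % m < m) (j : Fin m) :
      (α j ^ Fintype.card K ^ b) ^ Fintype.card K ^ e =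
        frobeniusMatrix (Fintype.card K) α ⟨(b + e) % m, hb⟩ j := by
    rw [frobeniusMatrix, of_apply, Fin.val_mk, ← pow_mul, ← pow_add]
    subst hm
    exact (pow_card_pow_mod_finrank _ _).symm
  ext x
  rw [gab, mem_galoisDual_span_iff (FiniteField.frobeniusAlgHom K F ^ e).toRingHom hφ,
    mem_span_image_rows_iff (frobeniusMatrix_mul_transpose_eq_one hm hsd)]
  simp only [Set.forall_mem_range, Set.mem_ofPred_eq, not_forall, not_not]
  constructor
  · rintro h a ⟨b, hb, hba⟩
    have hlt : (b + e) % m < m := hba ▸ a.2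
    rw [show a = ⟨(b + e) % m, hlt⟩ from Fin.ext hba.symm, dotProduct_comm]
    simpa only [dotProduct, hrow b hlt] using h ⟨b, hb⟩
  · intro h b
    rcases Nat.eq_zero_or_pos m with rfl | hpos
    · simp
    · have hb := h ⟨_, Nat.mod_lt _ hpos⟩ ⟨b, b.2, rfl⟩
      rw [dotProduct_comm] at hb
      simpa only [dotProduct, hrow b (Nat.mod_lt _ hpos)] using hb

end FiniteField

theorem lt_or_forall_add_mod_ne_iff {a k e m : ℕ} (ha : a < m) (he : e ≤ k) :
    (a < k ∨ ∀ b < k, (b + e) % m ≠ a) ↔ a < k ∨ k + e ≤ a := by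
  refine or_congr_right' fun hka => ⟨fun h => ?_, fun h b hb => ?_⟩
  · by_contra! hlt
    exact h (a - e) (by omega) (by rw [Nat.sub_add_cancel (by omega), Nat.mod_eq_of_lt ha])
  · rw [Nat.mod_eq_of_lt (by omega)]
    omega

theorem Fin.card_filter_val_lt_or_add_le {m k e : ℕ} (hk : k ≤ m) (he : e ≤ k) :
    #{a : Fin m | (a : ℕ) < k ∨ k + e ≤ a} = max k (m - e) := by
  have hlt : #{a : Fin m | (a : ℕ) < k} = k := by
    rw [Fin.card_filter_val_lt, min_eq_right hk]
  have hle : #{a : Fin m | k + e ≤ (a : ℕ)} = m - (k + e) := by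
    have := Finset.card_filter_add_card_filter_not (s := Finset.univ)
      (fun a : Fin m => (a : ℕ) < k + e)
    simp only [Fin.card_filter_val_lt, not_lt, Finset.card_univ, Fintype.card_fin] at this
    omega
  rw [Finset.filter_or, Finset.card_union_of_disjoint
    (Finset.disjoint_filter.2 fun a _ h => by omega), hlt, hle]
  omega

theorem finrank_sup_gab_galoisDual_of_le_general
    (q m : ℕ)
    (K F : Type) [Field K] [Field F] [Algebra K F] [Fintype K] [Fintype F]
    (hK : Fintype.card K = q)
    (α : Fin m → F) (hα : ∃ b : Module.Basis (Fin m) K F, ⇑b = α)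
    (hsd : ∀ i j, Algebra.trace K F (α i * α j) = if i = j then 1 else 0)
    (k e : ℕ) (hk2 : k ≤ m - 1) (he : e ≤ k) :
    Module.finrank F ↥(gab q k α ⊔ galoisDual q e (gab q k α)) = max k (m - e) := by
  obtain ⟨b, -⟩ := hα
  have hm : finrank K F = m := (finrank_eq_card_basis b).trans (Fintype.card_fin m)
  have hindices : {a : Fin m | (a : ℕ) < k} ∪ {a | ∀ b < k, (b + e) % m ≠ a} =
      ↑({a : Fin m | (a : ℕ) < k ∨ k + e ≤ a} : Finset (Fin m)) := by
    ext a
    simpa using lt_or_forall_add_mod_ne_iff a.2 he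
  subst hK
  rw [galoisDual_gab_eq_span_frobeniusMatrix hm hsd, gab_eq_span_frobeniusMatrix α (by omega),
    ← span_union, ← Set.image_union, hindices,
    finrank_span_image_rows (frobeniusMatrix_mul_transpose_eq_one hm hsd),
    Fin.card_filter_val_lt_or_add_le (by omega) he]

/-- For a self-dual basis `α`, `1 ≤ k ≤ m-1` and `0 ≤ e ≤ k`,
`dim (G_k(α) + G_k(α)^{⊥_e}) = max k (m - e)`. -/
theorem finrank_sup_gab_galoisDual_of_le
    (q m : ℕ) (hq : IsPrimePow q) (hm : 0 < m)
    (K F : Type) [Field K] [Field F] [Algebra K F] [Fintype K] [Fintype F]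
    (hK : Fintype.card K = q) (hF : Fintype.card F = q ^ m)
    (α : Fin m → F) (hα : ∃ b : Module.Basis (Fin m) K F, ⇑b = α)
    (hsd : ∀ i j, Algebra.trace K F (α i * α j) = if i = j then 1 else 0)
    (k e : ℕ) (hk1 : 1 ≤ k) (hk2 : k ≤ m - 1) (he : e ≤ k) :
    Module.finrank F ↥(gab q k α ⊔ galoisDual q e (gab q k α)) = max k (m - e) :=
  finrank_sup_gab_galoisDual_of_le_general q m K F hK α hα hsd k e hk2 he
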